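/- arXiv:1204.1931 — 3 statements merged into one kernel-verified Lean document; each statement's English description precedes it below -/
import Mathlib

section
/- Let U ⊆ ℂ be open, let a ∈ U, let n ≥ 1 be a natural number, and let g : U → ℂ be holomorphic with g(z) ≠ 0 for all z in some neighborhood of a. Define f(z) = (z - a)^n · g(z). Then there exist open neighborhoods V and W of a and a bijective holomorphic map h : V → W with h(a) = a and holomorphic inverse, such that f(h⁻¹(w)) = (w - a)^n for all w ∈ W. -/
open Complex Set Filter

private lemma analyticAt_strict {f : ℂ → ℂ} {x : ℂ} (h : AnalyticAt ℂ f x) :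
    HasStrictDerivAt f (deriv f x) x := by
  obtain ⟨p, hp⟩ := h
  have := hp.hasStrictDerivAt
  rwa [← hp.deriv] at this

/-- If `f z = (z - a) ^ n * g z` with `g` holomorphic on an open set `U`
and nonvanishing near `a ∈ U`, then there is a conformal map `h` (with holomorphic inverse
`hinv`) between neighborhoods `V`, `W` of `a`, fixing `a`, with `f (hinv w) = (w - a) ^ n`. -/
theorem locally_polynomial
    (U : Set ℂ) (hU : IsOpen U) (a : ℂ) (ha : a ∈ U)
    (n : ℕ) (hn : 1 ≤ n)
    (g : ℂ → ℂ) (hg : DifferentiableOn ℂ g U)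
    (hg0 : ∀ᶠ z in nhds a, g z ≠ 0)
    (f : ℂ → ℂ) (hf : ∀ z, f z = (z - a) ^ n * g z) :
    ∃ (V W : Set ℂ) (h hinv : ℂ → ℂ),
      IsOpen V ∧ IsOpen W ∧ a ∈ V ∧ a ∈ W ∧ V ⊆ U ∧
      DifferentiableOn ℂ h V ∧ DifferentiableOn ℂ hinv W ∧
      Set.BijOn h V W ∧
      (∀ z ∈ V, hinv (h z) = z) ∧ (∀ w ∈ W, h (hinv w) = w) ∧
      h a = a ∧
      (∀ w ∈ W, f (hinv w) = (w - a) ^ n) := by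
  obtain ⟨t, ht0, htO, hta⟩ := eventually_nhds_iff.1 hg0
  have hga : g a ≠ 0 := ht0 a hta
  set s : Set ℂ := U ∩ t with hs
  have hsO : IsOpen s := hU.inter htO
  have hsa : a ∈ s := ⟨ha, hta⟩
  have hgs : ∀ z ∈ s, DifferentiableAt ℂ g z := fun z hz =>
    (hg.differentiableAt (hU.mem_nhds hz.1))
  -- V₀ : open nbhd of a where everything is nice
  set V₀ : Set ℂ := s ∩ (fun z => g z / g a) ⁻¹' Complex.slitPlane with hV₀
  have hV₀O : IsOpen V₀ := by
    apply ContinuousOn.isOpen_inter_preimage ?_ hsO Complex.isOpen_slitPlane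
    exact fun z hz => ((hgs z hz).continuousAt.div_const _).continuousWithinAt
  have hV₀a : a ∈ V₀ := by
    refine ⟨hsa, ?_⟩
    simp [div_self hga, Complex.one_mem_slitPlane]
  have hV₀U : V₀ ⊆ U := fun z hz => hz.1.1
  -- the n-th root φ of g
  set φ : ℂ → ℂ := fun z => Complex.exp ((Complex.log (g a) + Complex.log (g z / g a)) / n)
    with hφdef
  have hnC : (n : ℂ) ≠ 0 := Nat.cast_ne_zero.2 (by omega)
  have hφn : ∀ z ∈ V₀, φ z ^ n = g z := by
    intro z hz
    have hgz : g z ≠ 0 := ht0 z hz.1.2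
    rw [hφdef, ← Complex.exp_nat_mul, mul_div_cancel₀ _ hnC, Complex.exp_add,
      Complex.exp_log hga, Complex.exp_log (div_ne_zero hgz hga), mul_div_cancel₀ _ hga]
  have hφd : ∀ z ∈ V₀, DifferentiableAt ℂ φ z := by
    intro z hz
    exact ((((hgs z hz.1).div_const _).clog hz.2).const_add _).div_const _ |>.cexp
  have hφ0 : ∀ z, φ z ≠ 0 := fun z => Complex.exp_ne_zero _
  -- the conformal map h
  set h : ℂ → ℂ := fun z => a + (z - a) * φ z with hhdef
  have hhd : ∀ z ∈ V₀, DifferentiableAt ℂ h z := by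
    intro z hz
    exact (((differentiableAt_id.sub_const a).mul (hφd z hz)).const_add a)
  have hhdo : DifferentiableOn ℂ h V₀ := fun z hz => (hhd z hz).differentiableWithinAt
  have hhan : AnalyticOnNhd ℂ h V₀ := hhdo.analyticOnNhd hV₀O
  have hha : h a = a := by simp [hhdef]
  have hda : HasDerivAt h (φ a) a := by
    have h1 : HasDerivAt (fun z => (z - a) * φ z) (1 * φ a + (a - a) * deriv φ a) a :=
      ((hasDerivAt_id a).sub_const a).mul (hφd a hV₀a).hasDerivAt
    have h2 := h1.const_add a
    simp only [sub_self, zero_mul, add_zero, one_mul] at h2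
    exact h2
  have hderiva : deriv h a = φ a := hda.deriv
  -- the set where deriv h ≠ 0
  set D : Set ℂ := V₀ ∩ deriv h ⁻¹' {0}ᶜ with hD
  have hDO : IsOpen D :=
    ContinuousOn.isOpen_inter_preimage
      (fun z hz => ((hhan.deriv z hz).continuousAt).continuousWithinAt) hV₀O isOpen_compl_singleton
  have hDa : a ∈ D := ⟨hV₀a, by simp [hderiva, hφ0 a]⟩
  have hstrict : ∀ z ∈ V₀, HasStrictDerivAt h (deriv h z) z :=
    fun z hz => analyticAt_strict (hhan z hz)
  -- inverse function theorem
  have hsa' : HasStrictDerivAt h (deriv h a) a := hstrict a hV₀a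
  have hda0 : deriv h a ≠ 0 := by rw [hderiva]; exact hφ0 a
  set e := (hsa'.hasStrictFDerivAt_equiv hda0).toOpenPartialHomeomorph h with he
  have hecoe : ⇑e = h := rfl
  have haes : a ∈ e.source :=
    (hsa'.hasStrictFDerivAt_equiv hda0).mem_toOpenPartialHomeomorph_source
  set V : Set ℂ := e.source ∩ D with hV
  have hVO : IsOpen V := e.open_source.inter hDO
  have hVa : a ∈ V := ⟨haes, hDa⟩
  have hVV₀ : V ⊆ V₀ := fun z hz => hz.2.1
  set W : Set ℂ := h '' V with hW
  have hWO : IsOpen W := by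
    rw [hW, ← hecoe]
    exact e.isOpen_image_of_subset_source hVO inter_subset_left
  have hWa : a ∈ W := ⟨a, hVa, hha⟩
  set hinv : ℂ → ℂ := ⇑e.symm with hinvdef
  have hleft : ∀ z ∈ V, hinv (h z) = z := by
    intro z hz
    rw [hinvdef, ← hecoe]
    exact e.left_inv hz.1
  have hright : ∀ w ∈ W, h (hinv w) = w := by
    rintro w ⟨z, hz, rfl⟩
    rw [hleft z hz]
  have hinvmem : ∀ w ∈ W, hinv w ∈ V := by
    rintro w ⟨z, hz, rfl⟩
    rw [hleft z hz]; exact hz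
  refine ⟨V, W, h, hinv, hVO, hWO, hVa, hWa, fun z hz => hV₀U (hVV₀ hz),
    fun z hz => (hhd z (hVV₀ hz)).differentiableWithinAt, ?_, ?_, hleft, hright, hha, ?_⟩
  · -- hinv differentiable on W
    rintro w ⟨z, hz, rfl⟩
    have hcont : ContinuousAt hinv (h z) := by
      rw [hinvdef, ← hecoe]
      exact e.continuousAt_symm (e.map_source hz.1)
    have hfg : ∀ᶠ y in nhds (h z), h (hinv y) = y := by
      rw [← hecoe]
      exact e.eventually_right_inverse' hz.1
    have hz' : HasStrictDerivAt h (deriv h z) (hinv (h z)) := by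
      rw [hleft z hz]; exact hstrict z (hVV₀ hz)
    exact (HasStrictDerivAt.hasDerivAt (HasStrictDerivAt.of_local_left_inverse hcont hz' hz.2.2 hfg)).differentiableAt.differentiableWithinAt
  · -- BijOn
    refine ⟨fun z hz => ⟨z, hz, rfl⟩, ?_, fun w hw => hw⟩
    intro x hx y hy hxy
    rw [← hecoe] at hxy
    exact e.injOn hx.1 hy.1 hxy
  · -- main identity
    intro w hw
    have hz : hinv w ∈ V := hinvmem w hw
    have : f (hinv w) = ((hinv w - a) * φ (hinv w)) ^ n := by
      rw [hf, mul_pow, hφn _ (hVV₀ hz)]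
    rw [this]
    have : (hinv w - a) * φ (hinv w) = w - a := by
      have := hright w hw
      rw [hhdef] at this
      dsimp only at this
      linear_combination this
    rw [this]
end

section
/- Let U ⊆ ℂ be open, let f : U → ℂ be holomorphic, and let γ : [0,1] → U be a continuously differentiable curve with γ′(t) ≠ 0 and f′(γ(t)) ≠ 0 for all t ∈ [0,1]. If the function t ↦ Im f(γ(t)) is constant on [0,1], then the function t ↦ Re f(γ(t)) is strictly monotone on [0,1] (either strictly increasing or strictly decreasing). -/
set_option maxHeartbeats 1000000 in
/-- If `f` is holomorphic on an open set `U`, `γ : [0,1] → U` is a `C¹` curve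
with nonvanishing derivative, `f' ≠ 0` along `γ`, and `Im (f ∘ γ)` is constant on `[0,1]`,
then `Re (f ∘ γ)` is strictly monotone on `[0,1]`. -/
theorem harmonic_conjugate_strictMono_on_level_curve
    (U : Set ℂ) (hU : IsOpen U)
    (f : ℂ → ℂ) (hf : DifferentiableOn ℂ f U)
    (γ γ' : ℝ → ℂ)
    (hγU : ∀ t ∈ Set.Icc (0 : ℝ) 1, γ t ∈ U)
    (hγderiv : ∀ t ∈ Set.Icc (0 : ℝ) 1, HasDerivWithinAt γ (γ' t) (Set.Icc (0 : ℝ) 1) t)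
    (hγ'cont : ContinuousOn γ' (Set.Icc (0 : ℝ) 1))
    (hγ'ne : ∀ t ∈ Set.Icc (0 : ℝ) 1, γ' t ≠ 0)
    (hf'ne : ∀ t ∈ Set.Icc (0 : ℝ) 1, deriv f (γ t) ≠ 0)
    (hIm : ∀ s ∈ Set.Icc (0 : ℝ) 1, ∀ t ∈ Set.Icc (0 : ℝ) 1,
      (f (γ s)).im = (f (γ t)).im) :
    StrictMonoOn (fun t => (f (γ t)).re) (Set.Icc (0 : ℝ) 1) ∨
    StrictAntiOn (fun t => (f (γ t)).re) (Set.Icc (0 : ℝ) 1) := by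
  set I : Set ℝ := Set.Icc (0 : ℝ) 1 with hI
  set d : ℝ → ℂ := fun t => deriv f (γ t) * γ' t with hd
  -- chain rule
  have hcomp : ∀ t ∈ I, HasDerivWithinAt (fun t => f (γ t)) (d t) I t := by
    intro t ht
    have hfa : HasDerivAt f (deriv f (γ t)) (γ t) :=
      ((hf.differentiableAt (hU.mem_nhds (hγU t ht))).hasDerivAt)
    simpa [hd, mul_comm, Function.comp_def] using hfa.comp_hasDerivWithinAt t (hγderiv t ht)
  have hre : ∀ t ∈ I, HasDerivWithinAt (fun t => (f (γ t)).re) ((d t).re) I t := by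
    intro t ht
    exact (Complex.reCLM.hasFDerivAt.comp_hasDerivWithinAt t (hcomp t ht))
  have him : ∀ t ∈ I, HasDerivWithinAt (fun t => (f (γ t)).im) ((d t).im) I t := by
    intro t ht
    exact (Complex.imCLM.hasFDerivAt.comp_hasDerivWithinAt t (hcomp t ht))
  -- Im derivative is zero
  have hunique : UniqueDiffOn ℝ I := uniqueDiffOn_Icc one_pos
  have him0 : ∀ t ∈ I, (d t).im = 0 := by
    intro t ht
    have hc : HasDerivWithinAt (fun t => (f (γ t)).im) 0 I t := by
      have : HasDerivWithinAt (fun _ : ℝ => (f (γ t)).im) 0 I t := hasDerivWithinAt_const _ _ _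
      exact this.congr (fun s hs => hIm s hs t ht) (hIm t ht t ht)
    have h1 := (him t ht).derivWithin (hunique t ht)
    have h2 := hc.derivWithin (hunique t ht)
    rw [← h1, h2]
  have hdne : ∀ t ∈ I, (d t).re ≠ 0 := by
    intro t ht h0
    exact (mul_ne_zero (hf'ne t ht) (hγ'ne t ht)) (Complex.ext h0 (him0 t ht))
  -- continuity of t ↦ (d t).re
  have hγcont : ContinuousOn γ I := fun t ht => (hγderiv t ht).continuousWithinAt
  have hf'cont : ContinuousOn (deriv f) U :=
    (((hf.analyticOnNhd hU).deriv).continuousOn)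
  have hdcont : ContinuousOn (fun t => (d t).re) I :=
    (Complex.continuous_re.comp_continuousOn
      (((hf'cont.comp hγcont fun t ht => hγU t ht)).mul hγ'cont))
  have h0I : (0 : ℝ) ∈ I := Set.left_mem_Icc.2 zero_le_one
  have hcontRe : ContinuousOn (fun t => (f (γ t)).re) I :=
    fun t ht => (hre t ht).continuousWithinAt
  have hmono : ∀ t ∈ I, HasDerivWithinAt (fun t => (f (γ t)).re) ((d t).re) (interior I) t :=
    fun t ht => (hre t ht).mono interior_subset
  -- constant sign by IVT
  rcases lt_or_gt_of_ne (hdne 0 h0I) with hneg | hpos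
  · right
    refine strictAntiOn_of_hasDerivWithinAt_neg (convex_Icc 0 1) hcontRe
      (fun t ht => hmono t (interior_subset ht)) (fun t ht => ?_)
    have ht' : t ∈ I := interior_subset ht
    by_contra hle
    push_neg at hle
    have hlt : 0 < (d t).re := lt_of_le_of_ne hle (Ne.symm (hdne t ht'))
    have hconn : IsPreconnected I := (convex_Icc 0 1).isPreconnected
    obtain ⟨s, hsI, hs0⟩ := hconn.intermediate_value₂ h0I ht' hdcont
      (continuousOn_const) (le_of_lt hneg) (le_of_lt hlt)
    exact hdne s hsI hs0
  · left
    refine strictMonoOn_of_hasDerivWithinAt_pos (convex_Icc 0 1) hcontRe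
      (fun t ht => hmono t (interior_subset ht)) (fun t ht => ?_)
    have ht' : t ∈ I := interior_subset ht
    by_contra hle
    push_neg at hle
    have hlt : (d t).re < 0 := lt_of_le_of_ne hle (hdne t ht')
    have hconn : IsPreconnected I := (convex_Icc 0 1).isPreconnected
    obtain ⟨s, hsI, hs0⟩ := hconn.intermediate_value₂ ht' h0I hdcont
      (continuousOn_const) (le_of_lt hlt) (le_of_lt hpos)
    exact hdne s hsI hs0
end

section
/- Let D′ = H ∖ (L₁ ∪ … ∪ Lₙ) be a chordal standard domain, where H = {z ∈ ℂ : Im z > 0} and L₁,…,Lₙ are pairwise disjoint closed bounded horizontal line segments contained in H. Then for every real number r > 0, the set {z ∈ D′ : Im z ≤ r} is a connected subset of ℂ. -/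
/-- A closed bounded horizontal line segment of positive length at positive height. -/
def IsHorizontalSegment (L : Set ℂ) : Prop :=
  ∃ x₁ x₂ y₀ : ℝ, x₁ < x₂ ∧ 0 < y₀ ∧
    L = {z : ℂ | z.im = y₀ ∧ z.re ∈ Set.Icc x₁ x₂}

/-- `D` is a chordal standard domain with exactly `n` removed segments: the upper half-plane
minus `n` pairwise disjoint closed bounded horizontal segments. -/
def IsChordalStandardDomain (D : Set ℂ) (n : ℕ) : Prop :=
  ∃ L : Fin n → Set ℂ,
    (∀ i, IsHorizontalSegment (L i)) ∧
    Pairwise (Function.onFun Disjoint L) ∧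
    D = {z : ℂ | 0 < z.im} \ ⋃ i, L i

/-- In a chordal standard domain `D'`, for every `r > 0` the set
`{z ∈ D' : Im z ≤ r}` is connected. -/
theorem chordalStandardDomain_sublevel_connected
    (D' : Set ℂ) (n : ℕ) (hD' : IsChordalStandardDomain D' n)
    (r : ℝ) (hr : 0 < r) :
    IsConnected {z : ℂ | z ∈ D' ∧ z.im ≤ r} := by
  obtain ⟨L, hSeg, _hDisj, hD⟩ := hD'
  choose a b Y hab hY hL using hSeg
  -- membership helper
  have hmem : ∀ x t : ℝ, 0 < t → t ≤ r → (∀ i, t = Y i → x < a i ∨ b i < x) →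
      (↑x + ↑t * Complex.I) ∈ {z : ℂ | z ∈ D' ∧ z.im ≤ r} := by
    intro x t ht htr hAvoid
    have him : (↑x + ↑t * Complex.I : ℂ).im = t := by simp
    have hre : (↑x + ↑t * Complex.I : ℂ).re = x := by simp
    simp only [Set.mem_setOf_eq]
    refine ⟨?_, by rw [him]; exact htr⟩
    rw [hD]
    refine ⟨by simp only [Set.mem_setOf_eq, him]; exact ht, ?_⟩
    intro hiu
    obtain ⟨i, hi⟩ := Set.mem_iUnion.mp hiu
    rw [hL i] at hi
    obtain ⟨h1, h2⟩ := hi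
    rw [him] at h1
    rw [hre] at h2
    rcases hAvoid i h1 with h | h
    · linarith [h2.1]
    · linarith [h2.2]
  -- small height ε
  have hFne : (insert r (Finset.image Y Finset.univ)).Nonempty :=
    ⟨r, Finset.mem_insert_self _ _⟩
  set m : ℝ := (insert r (Finset.image Y Finset.univ)).min' hFne with hm
  have hmr : m ≤ r := Finset.min'_le _ _ (Finset.mem_insert_self _ _)
  have hmY : ∀ i, m ≤ Y i := fun i =>
    Finset.min'_le _ _ (Finset.mem_insert_of_mem (Finset.mem_image_of_mem _ (Finset.mem_univ i)))
  have hmpos : 0 < m := by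
    have h := Finset.min'_mem _ hFne
    rw [← hm] at h
    rcases Finset.mem_insert.mp h with h | h
    · rw [h]; exact hr
    · obtain ⟨i, _, hi⟩ := Finset.mem_image.mp h
      rw [← hi]; exact hY i
  set ε : ℝ := m / 2 with hε
  have hεpos : 0 < ε := by positivity
  have hεr : ε ≤ r := by rw [hε]; linarith
  -- large abscissa M
  have hFbne : (insert (0:ℝ) (Finset.image b Finset.univ)).Nonempty :=
    ⟨0, Finset.mem_insert_self _ _⟩
  set M : ℝ := (insert (0:ℝ) (Finset.image b Finset.univ)).max' hFbne + 1 with hM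
  have hMb : ∀ i, b i < M := by
    intro i
    have : b i ≤ (insert (0:ℝ) (Finset.image b Finset.univ)).max' hFbne :=
      Finset.le_max' _ _ (Finset.mem_insert_of_mem (Finset.mem_image_of_mem _ (Finset.mem_univ i)))
    rw [hM]; linarith
  -- base point
  have hx₀ : (↑M + ↑ε * Complex.I) ∈ {z : ℂ | z ∈ D' ∧ z.im ≤ r} :=
    hmem M ε hεpos hεr (fun i _ => Or.inr (hMb i))
  refine ⟨⟨_, hx₀⟩, ?_⟩
  apply isPreconnected_of_forall ((↑M : ℂ) + ↑ε * Complex.I)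
  intro z hz
  obtain ⟨hzD, hzr⟩ := hz
  rw [hD] at hzD
  obtain ⟨hzim, hzL⟩ := hzD
  have hzim : (0:ℝ) < z.im := hzim
  have hzL' : ∀ i, ¬ (z.im = Y i ∧ a i ≤ z.re ∧ z.re ≤ b i) := by
    intro i h
    exact hzL (Set.mem_iUnion.mpr ⟨i, by rw [hL i]; exact ⟨h.1, h.2.1, h.2.2⟩⟩)
  -- choose δ
  have hGne : (insert z.im ((Finset.univ.filter (fun i => Y i < z.im)).image
      (fun i => z.im - Y i))).Nonempty := ⟨z.im, Finset.mem_insert_self _ _⟩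
  set δ : ℝ := (insert z.im ((Finset.univ.filter (fun i => Y i < z.im)).image
      (fun i => z.im - Y i))).min' hGne / 2 with hδ
  have hδpos : 0 < δ := by
    have hall : ∀ g ∈ (insert z.im ((Finset.univ.filter (fun i => Y i < z.im)).image
        (fun i => z.im - Y i))), 0 < g := by
      intro g hg
      rcases Finset.mem_insert.mp hg with h | h
      · rw [h]; exact hzim
      · obtain ⟨i, hi, hgi⟩ := Finset.mem_image.mp h
        have := (Finset.mem_filter.mp hi).2
        rw [← hgi]; linarith
    have := hall _ (Finset.min'_mem _ hGne)
    rw [hδ]; linarith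
  have hδim : 2 * δ ≤ z.im := by
    have := Finset.min'_le _ z.im (Finset.mem_insert_self z.im
      ((Finset.univ.filter (fun i => Y i < z.im)).image (fun i => z.im - Y i)))
    rw [hδ]; linarith
  have hδY : ∀ i, Y i < z.im → 2 * δ ≤ z.im - Y i := by
    intro i hi
    have hmem' : z.im - Y i ∈ (insert z.im ((Finset.univ.filter (fun i => Y i < z.im)).image
        (fun i => z.im - Y i))) :=
      Finset.mem_insert_of_mem (Finset.mem_image_of_mem _
        (Finset.mem_filter.mpr ⟨Finset.mem_univ i, hi⟩))
    have := Finset.min'_le _ _ hmem'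
    rw [hδ]; linarith
  set t₀ : ℝ := z.im - δ with ht₀
  have ht₀pos : 0 < t₀ := by rw [ht₀]; linarith
  have ht₀r : t₀ ≤ r := by rw [ht₀]; linarith
  have ht₀Y : ∀ i, t₀ ≠ Y i := by
    intro i h
    rcases lt_or_ge (Y i) z.im with hlt | hge
    · have := hδY i hlt
      rw [ht₀] at h; linarith
    · rw [ht₀] at h; linarith
  -- the path
  refine ⟨((fun t : ℝ => ((↑z.re : ℂ) + ↑t * Complex.I)) '' Set.Icc t₀ z.im) ∪
      (((fun x : ℝ => ((↑x : ℂ) + ↑t₀ * Complex.I)) '' Set.uIcc z.re M) ∪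
       ((fun t : ℝ => ((↑M : ℂ) + ↑t * Complex.I)) '' Set.uIcc ε t₀)), ?_, ?_, ?_, ?_⟩
  · rintro w (⟨t, ht, rfl⟩ | ⟨x, hx, rfl⟩ | ⟨t, ht, rfl⟩)
    · refine hmem _ _ (lt_of_lt_of_le ht₀pos ht.1) (le_trans ht.2 hzr) ?_
      intro i hti
      rcases lt_trichotomy (Y i) z.im with hlt | heq | hgt
      · exfalso
        have := hδY i hlt
        have := ht.1
        rw [ht₀] at this; linarith
      · have h2 : ¬ (a i ≤ z.re ∧ z.re ≤ b i) := fun hc => hzL' i ⟨heq.symm, hc.1, hc.2⟩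
        rcases not_and_or.mp h2 with h | h
        · exact Or.inl (not_le.mp h)
        · exact Or.inr (not_le.mp h)
      · exfalso; have := ht.2; linarith
    · refine hmem _ _ ht₀pos ht₀r ?_
      intro i h; exact absurd h (ht₀Y i)
    · rcases Set.mem_uIcc.mp ht with ⟨h1, h2⟩ | ⟨h1, h2⟩
      · exact hmem _ _ (by linarith) (by linarith) (fun i _ => Or.inr (hMb i))
      · exact hmem _ _ (by linarith) (by linarith) (fun i _ => Or.inr (hMb i))
  · exact Or.inr (Or.inr ⟨ε, Set.left_mem_uIcc, rfl⟩)
  · exact Or.inl ⟨z.im, ⟨by rw [ht₀]; linarith, le_refl _⟩, Complex.re_add_im z⟩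
  · have c1 : IsPreconnected ((fun t : ℝ => ((↑z.re : ℂ) + ↑t * Complex.I)) '' Set.Icc t₀ z.im) :=
      isPreconnected_Icc.image _ (Continuous.continuousOn (continuous_const.add (Complex.continuous_ofReal.mul continuous_const)))
    have c2 : IsPreconnected ((fun x : ℝ => ((↑x : ℂ) + ↑t₀ * Complex.I)) '' Set.uIcc z.re M) :=
      isPreconnected_uIcc.image _ (Continuous.continuousOn (Complex.continuous_ofReal.add continuous_const))
    have c3 : IsPreconnected ((fun t : ℝ => ((↑M : ℂ) + ↑t * Complex.I)) '' Set.uIcc ε t₀) :=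
      isPreconnected_uIcc.image _ (Continuous.continuousOn (continuous_const.add (Complex.continuous_ofReal.mul continuous_const)))
    have hw2 : ((↑M : ℂ) + ↑t₀ * Complex.I) ∈
        (fun x : ℝ => ((↑x : ℂ) + ↑t₀ * Complex.I)) '' Set.uIcc z.re M :=
      ⟨M, Set.right_mem_uIcc, rfl⟩
    have hw3 : ((↑M : ℂ) + ↑t₀ * Complex.I) ∈
        (fun t : ℝ => ((↑M : ℂ) + ↑t * Complex.I)) '' Set.uIcc ε t₀ :=
      ⟨t₀, Set.right_mem_uIcc, rfl⟩
    have c23 := IsPreconnected.union _ hw2 hw3 c2 c3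
    have hz1 : ((↑z.re : ℂ) + ↑t₀ * Complex.I) ∈
        (fun t : ℝ => ((↑z.re : ℂ) + ↑t * Complex.I)) '' Set.Icc t₀ z.im :=
      ⟨t₀, ⟨le_refl _, by rw [ht₀]; linarith⟩, rfl⟩
    have hz2 : ((↑z.re : ℂ) + ↑t₀ * Complex.I) ∈
        ((fun x : ℝ => ((↑x : ℂ) + ↑t₀ * Complex.I)) '' Set.uIcc z.re M) ∪
        ((fun t : ℝ => ((↑M : ℂ) + ↑t * Complex.I)) '' Set.uIcc ε t₀) :=
      Or.inl ⟨z.re, Set.left_mem_uIcc, rfl⟩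
    exact IsPreconnected.union _ hz1 hz2 c1 c23
end
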